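/- Under the hypotheses of the flocking error dynamics of Theorem 1 — i.e., with J twice continuously differentiable, each neighbor moving with ṗ_j = v_j o(θ_j), agent i a unicycle trajectory driven by the orientation-unconstrained distributed flocking controller, the Hessian at the offset point invertible, and the averaged gradient-difference vector m_i(t) = (1/N') Σ_{j∈N'_i} ∇J(p_j(t)) − ∇J(p_{io}(t)) nonzero for all t ≥ 0 — the flocking error e_i(t) = ‖m_i(t)‖ − d*_{∇J} satisfies e_i(t) = e^{−K_f t} e_i(0) for all t ≥ 0. In particular, if K_f > 0 then e_i(t) → 0 as t → ∞, so ‖(1/N') Σ_{j∈N'_i} ∇J(p_j(t)) − ∇J(p_{io}(t))‖ → d*_{∇J}, achieving the flocking cohesion task. -/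

import Mathlib

open Real Filter
open scoped RealInnerProductSpace

/-- The planar vector with the given coordinates, as an element of `ℝ²`. -/
noncomputable def vec2 (a b : ℝ) : EuclideanSpace ℝ (Fin 2) :=
  (WithLp.equiv 2 (Fin 2 → ℝ)).symm ![a, b]

/-- The Hessian `∇²J(p)` of a scalar field on `ℝ²`, as the derivative of the gradient. -/
noncomputable def hess (J : EuclideanSpace ℝ (Fin 2) → ℝ) (p : EuclideanSpace ℝ (Fin 2)) :
    EuclideanSpace ℝ (Fin 2) →L[ℝ] EuclideanSpace ℝ (Fin 2) :=
  fderiv ℝ (gradient J) p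

lemma inner_vec2 (a b c d : ℝ) : ⟪vec2 a b, vec2 c d⟫ = a*c + b*d := by
  simp [vec2, PiLp.inner_apply, Fin.sum_univ_two, PiLp.toLp_apply]
  ring

lemma vec2_eq_smul (a b : ℝ) : vec2 a b = a • vec2 1 0 + b • vec2 0 1 := by
  ext i
  fin_cases i <;> simp [vec2, PiLp.toLp_apply]

lemma hasDerivAt_vec2 {f g : ℝ → ℝ} {f' g' : ℝ} {t : ℝ} (hf : HasDerivAt f f' t)
    (hg : HasDerivAt g g' t) :
    HasDerivAt (fun t => vec2 (f t) (g t)) (vec2 f' g') t := by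
  have : (fun t => vec2 (f t) (g t)) = fun t => f t • vec2 1 0 + g t • vec2 0 1 := by
    funext t; exact vec2_eq_smul _ _
  rw [this, vec2_eq_smul f' g']
  exact (hf.smul_const _).add (hg.smul_const _)

lemma basis_decomp (θ : ℝ) (w : EuclideanSpace ℝ (Fin 2)) :
    ⟪vec2 (cos θ) (sin θ), w⟫ • vec2 (cos θ) (sin θ)
      + ⟪vec2 (sin θ) (-cos θ), w⟫ • vec2 (sin θ) (-cos θ) = w := by
  have h0 : w = vec2 (w 0) (w 1) := by
    ext i; fin_cases i <;> simp [vec2, PiLp.toLp_apply]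
  rw [h0, inner_vec2, inner_vec2]
  have := sin_sq_add_cos_sq θ
  ext i
  fin_cases i
  · simp [vec2, PiLp.toLp_apply]
    linear_combination w 0 * this
  · simp [vec2, PiLp.toLp_apply]
    linear_combination w 1 * this

lemma differentiable_gradient (J : EuclideanSpace ℝ (Fin 2) → ℝ) (hJ : ContDiff ℝ 2 J) :
    Differentiable ℝ (gradient J) := by
  have h1 : ContDiff ℝ 1 (fderiv ℝ J) := hJ.fderiv_right (by norm_num)
  have h2 : Differentiable ℝ (fderiv ℝ J) := h1.differentiable one_ne_zero
  have : gradient J = fun x =>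
      (InnerProductSpace.toDual ℝ (EuclideanSpace ℝ (Fin 2))).symm (fderiv ℝ J x) := rfl
  rw [this]
  exact fun x => ((InnerProductSpace.toDual ℝ
    (EuclideanSpace ℝ (Fin 2))).symm.toContinuousLinearEquiv.differentiableAt).comp x (h2 x)

lemma hasFDerivAt_gradient (J : EuclideanSpace ℝ (Fin 2) → ℝ) (hJ : ContDiff ℝ 2 J)
    (x : EuclideanSpace ℝ (Fin 2)) : HasFDerivAt (gradient J) (hess J x) x :=
  (differentiable_gradient J hJ x).hasFDerivAt

/-- Exponential flocking cohesion of Theorem 1: with a `C²` field `J`, neighbors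
`p_j` moving with `ṗ_j = v_j o(θ_j)`, agent `i` a unicycle with offset point
`p_io = (x_i + d cos θ_i, y_i + d sin θ_i)`, invertible Hessian `H = ∇²J(p_io)` (with
inverse `Hinv`), nonzero averaged gradient difference
`m_i = (1/N')Σ_j ∇J(p_j) − ∇J(p_io)`, `ê_i = m_i/‖m_i‖`, `e_i = ‖m_i‖ − d*`, and the
orientation-unconstrained distributed flocking controller, the flocking error satisfies `e_i(t) = e^{−K_f t} e_i(0)`; in particular, if `K_f > 0`
then `e_i(t) → 0` and `‖(1/N')Σ_j ∇J(p_j) − ∇J(p_io)‖ → d*`, achieving the flocking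
cohesion task. -/
theorem stmt_6
    (J : EuclideanSpace ℝ (Fin 2) → ℝ) (hJ : ContDiff ℝ 2 J)
    (Kf d dstar : ℝ) (hd : d ∈ Set.Ioo (0:ℝ) 1) (hdstar : 0 < dstar)
    (ι : Type) [Fintype ι] [Nonempty ι]
    (p : ι → ℝ → EuclideanSpace ℝ (Fin 2)) (v : ι → ℝ → ℝ) (θ : ι → ℝ → ℝ)
    (hp : ∀ j, ∀ t ≥ (0:ℝ),
      HasDerivAt (p j) (v j t • vec2 (cos (θ j t)) (sin (θ j t))) t)
    (xi yi θi vi ωi : ℝ → ℝ)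
    (hxi : ∀ t ≥ (0:ℝ), HasDerivAt xi (vi t * cos (θi t)) t)
    (hyi : ∀ t ≥ (0:ℝ), HasDerivAt yi (vi t * sin (θi t)) t)
    (hθi : ∀ t ≥ (0:ℝ), HasDerivAt θi (ωi t) t)
    (pio : ℝ → EuclideanSpace ℝ (Fin 2))
    (hpio : ∀ t, pio t = vec2 (xi t + d * cos (θi t)) (yi t + d * sin (θi t)))
    (Hinv : ℝ → EuclideanSpace ℝ (Fin 2) →L[ℝ] EuclideanSpace ℝ (Fin 2))
    (hHinv : ∀ t, (Hinv t).comp (hess J (pio t)) = ContinuousLinearMap.id ℝ _ ∧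
                  (hess J (pio t)).comp (Hinv t) = ContinuousLinearMap.id ℝ _)
    (m : ℝ → EuclideanSpace ℝ (Fin 2))
    (hm : ∀ t, m t = ((Fintype.card ι : ℝ))⁻¹ • (∑ j, gradient J (p j t)) - gradient J (pio t))
    (hmne : ∀ t, m t ≠ 0)
    (e : ℝ → ℝ) (he : ∀ t, e t = ‖m t‖ - dstar)
    (hvi : ∀ t ≥ (0:ℝ), vi t =
      Kf * e t * ⟪vec2 (cos (θi t)) (sin (θi t)), Hinv t (‖m t‖⁻¹ • m t)⟫
      + ((Fintype.card ι : ℝ))⁻¹ * ∑ j, v j t *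
          ⟪vec2 (cos (θi t)) (sin (θi t)),
            Hinv t (hess J (p j t) (vec2 (cos (θ j t)) (sin (θ j t))))⟫)
    (hωi : ∀ t ≥ (0:ℝ), ωi t =
      -(Kf * e t / d) * ⟪vec2 (sin (θi t)) (-cos (θi t)), Hinv t (‖m t‖⁻¹ • m t)⟫
      - ((Fintype.card ι : ℝ))⁻¹ * ∑ j, (v j t / d) *
          ⟪vec2 (sin (θi t)) (-cos (θi t)),
            Hinv t (hess J (p j t) (vec2 (cos (θ j t)) (sin (θ j t))))⟫) :
    (∀ t ≥ (0:ℝ), e t = Real.exp (-Kf * t) * e 0) ∧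
    (0 < Kf →
      Tendsto e atTop (nhds 0) ∧ Tendsto (fun t => ‖m t‖) atTop (nhds dstar)) := by
  have hdne : d ≠ 0 := ne_of_gt hd.1
  set c : ℝ := ((Fintype.card ι : ℝ))⁻¹ with hc
  -- derivative of the error
  have hed : ∀ t ≥ (0:ℝ), HasDerivAt e (-Kf * e t) t := by
    intro t ht
    set o := vec2 (cos (θi t)) (sin (θi t)) with ho
    set op := vec2 (sin (θi t)) (-cos (θi t)) with hop
    set eh := ‖m t‖⁻¹ • m t with heh
    set B : ι → EuclideanSpace ℝ (Fin 2) :=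
      fun j => hess J (p j t) (vec2 (cos (θ j t)) (sin (θ j t))) with hB
    set w : EuclideanSpace ℝ (Fin 2) :=
      (Kf * e t) • Hinv t eh + c • ∑ j, v j t • Hinv t (B j) with hw
    -- controller identities
    have hinner_o : ⟪o, w⟫ = Kf * e t * ⟪o, Hinv t eh⟫ + c * ∑ j, v j t * ⟪o, Hinv t (B j)⟫ := by
      simp only [hw, inner_add_right, real_inner_smul_right, inner_sum]
    have hinner_op : ⟪op, w⟫ =
        Kf * e t * ⟪op, Hinv t eh⟫ + c * ∑ j, v j t * ⟪op, Hinv t (B j)⟫ := by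
      simp only [hw, inner_add_right, real_inner_smul_right, inner_sum]
    have hvw : vi t = ⟪o, w⟫ := by rw [hinner_o]; exact hvi t ht
    have hww : d * ωi t = -⟪op, w⟫ := by
      have hsum : ∑ j, (v j t / d) * ⟪op, Hinv t (B j)⟫
          = (∑ j, v j t * ⟪op, Hinv t (B j)⟫) / d := by
        rw [Finset.sum_div]
        exact Finset.sum_congr rfl fun j _ => by ring
      have key : ∀ A S : ℝ, d * (-(Kf * e t / d) * A - c * (S / d))
          = -(Kf * e t * A + c * S) := by
        intro A S; field_simp; ring
      rw [hωi t ht, hinner_op, hsum]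
      exact key _ _
    -- derivative of the offset point
    have hpioD : HasDerivAt pio w t := by
      have hcosd : HasDerivAt (fun s => d * cos (θi s)) (d * (-sin (θi t) * ωi t)) t :=
        ((hθi t ht).cos).const_mul d
      have hsind : HasDerivAt (fun s => d * sin (θi s)) (d * (cos (θi t) * ωi t)) t :=
        ((hθi t ht).sin).const_mul d
      have hD := hasDerivAt_vec2 ((hxi t ht).add hcosd) ((hyi t ht).add hsind)
      have hpiofun : pio = fun s => vec2 (xi s + d * cos (θi s)) (yi s + d * sin (θi s)) :=
        funext hpio
      rw [hpiofun]
      have hu : vec2 (vi t * cos (θi t) + d * (-sin (θi t) * ωi t))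
          (vi t * sin (θi t) + d * (cos (θi t) * ωi t))
          = ⟪o, w⟫ • o + ⟪op, w⟫ • op := by
        rw [← hvw]
        have hop2 : ⟪op, w⟫ = -(d * ωi t) := by rw [hww]; ring
        rw [hop2, ho, hop]
        ext i
        fin_cases i <;> simp [vec2, PiLp.toLp_apply] <;> ring
      have : (⟪o, w⟫ • o + ⟪op, w⟫ • op) = w := basis_decomp _ _
      rw [hu, this] at hD
      exact hD
    -- derivative of m
    have hid : ∀ x, hess J (pio t) (Hinv t x) = x := by
      intro x
      have := DFunLike.congr_fun (hHinv t).2 x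
      simpa using this
    have hHw : hess J (pio t) w = (Kf * e t) • eh + c • ∑ j, v j t • B j := by
      rw [hw]
      simp [map_add, map_smul, map_sum, hid]
    have hgradD : ∀ j, HasDerivAt (fun s => gradient J (p j s))
        (v j t • B j) t := by
      intro j
      have := (hasFDerivAt_gradient J hJ (p j t)).comp_hasDerivAt t (hp j t ht)
      simp only [hB, map_smul] at this
      exact this
    have hgradpio : HasDerivAt (fun s => gradient J (pio s)) (hess J (pio t) w) t :=
      (hasFDerivAt_gradient J hJ (pio t)).comp_hasDerivAt t hpioD
    have hmd : HasDerivAt m (-(Kf * e t) • eh) t := by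
      have hD : HasDerivAt (fun s => c • (∑ j, gradient J (p j s)) - gradient J (pio s))
          (c • (∑ j, v j t • B j) - hess J (pio t) w) t :=
        ((HasDerivAt.fun_sum (fun j _ => hgradD j)).const_smul c).sub hgradpio
      have heq : c • (∑ j, v j t • B j) - hess J (pio t) w = -(Kf * e t) • eh := by
        rw [hHw]; module
      rw [heq] at hD
      exact hD.congr_of_eventuallyEq (Filter.Eventually.of_forall hm)
    -- derivative of the norm
    have hmnorm : ‖m t‖ ≠ 0 := norm_ne_zero_iff.mpr (hmne t)
    have hq : ⟪m t, m t⟫ ≠ 0 := inner_self_ne_zero.mpr (hmne t)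
    have hinnerD : HasDerivAt (fun s => ⟪m s, m s⟫)
        (⟪m t, -(Kf * e t) • eh⟫ + ⟪-(Kf * e t) • eh, m t⟫) t := hmd.inner ℝ hmd
    have hsqrtD := (Real.hasDerivAt_sqrt hq).comp t hinnerD
    have hefun : e = fun s => Real.sqrt ⟪m s, m s⟫ - dstar := by
      funext s
      rw [he s, real_inner_self_eq_norm_mul_norm, Real.sqrt_mul_self (norm_nonneg _)]
    have hval : 1 / (2 * Real.sqrt ⟪m t, m t⟫) *
        (⟪m t, -(Kf * e t) • eh⟫ + ⟪-(Kf * e t) • eh, m t⟫) = -Kf * e t := by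
      have h1 : Real.sqrt ⟪m t, m t⟫ = ‖m t‖ := by
        rw [real_inner_self_eq_norm_mul_norm, Real.sqrt_mul_self (norm_nonneg _)]
      have h2 : ⟪m t, m t⟫ = ‖m t‖ * ‖m t‖ := real_inner_self_eq_norm_mul_norm _
      rw [h1, heh, real_inner_smul_right, real_inner_smul_left, real_inner_smul_right,
        real_inner_smul_left, h2]
      field_simp
      ring
    have hptw : ∀ s, e s = Real.sqrt ⟪m s, m s⟫ - dstar := fun s => by rw [hefun]
    have h := hsqrtD.sub_const dstar
    rw [Function.comp_def, hval] at h
    exact h.congr_of_eventuallyEq (Filter.Eventually.of_forall hptw)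
  -- solve the ODE
  have hmain : ∀ t ≥ (0:ℝ), e t = Real.exp (-Kf * t) * e 0 := by
    intro t ht
    set g : ℝ → ℝ := fun s => Real.exp (Kf * s) * e s with hg
    have hgd : ∀ s ≥ (0:ℝ), HasDerivAt g 0 s := by
      intro s hs
      have h1 : HasDerivAt (fun u => Real.exp (Kf * u)) (Real.exp (Kf * s) * (Kf * 1)) s :=
        ((hasDerivAt_id s).const_mul Kf).exp
      have h2 : HasDerivAt (fun u => Real.exp (Kf * u) * e u)
          (Real.exp (Kf * s) * (Kf * 1) * e s + Real.exp (Kf * s) * (-Kf * e s)) s :=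
        h1.fun_mul (hed s hs)
      convert h2 using 1
      ring
    have hconst : g t = g 0 := by
      have := constant_of_has_deriv_right_zero (f := g) (a := 0) (b := t)
        (fun s hs => ((hgd s hs.1).continuousAt).continuousWithinAt)
        (fun s hs => (hgd s hs.1).hasDerivWithinAt)
      exact this t ⟨ht, le_rfl⟩
    have hg0 : g 0 = e 0 := by simp [hg]
    have hgt : Real.exp (Kf * t) * e t = e 0 := by rw [← hg0, ← hconst]
    have : e t = (Real.exp (Kf * t))⁻¹ * e 0 := by
      field_simp at hgt ⊢
      linarith [hgt]
    rw [this, ← Real.exp_neg]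
    ring_nf
  refine ⟨hmain, fun hKf => ?_⟩
  have hlim : Tendsto (fun t => Real.exp (-Kf * t) * e 0) atTop (nhds 0) := by
    have h1 : Tendsto (fun t : ℝ => Kf * t) atTop atTop :=
      Tendsto.const_mul_atTop hKf tendsto_id
    have h2 : Tendsto (fun t : ℝ => Real.exp (-(Kf * t))) atTop (nhds 0) :=
      Real.tendsto_exp_neg_atTop_nhds_zero.comp h1
    have h3 : Tendsto (fun t : ℝ => Real.exp (-(Kf * t)) * e 0) atTop (nhds (0 * e 0)) :=
      h2.mul_const (e 0)
    simpa [neg_mul] using h3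
  have heq : (fun t => Real.exp (-Kf * t) * e 0) =ᶠ[atTop] e :=
    (eventually_ge_atTop (0:ℝ)).mono fun t ht => (hmain t ht).symm
  have hte : Tendsto e atTop (nhds 0) := hlim.congr' heq
  refine ⟨hte, ?_⟩
  have : Tendsto (fun t => e t + dstar) atTop (nhds (0 + dstar)) :=
    hte.add_const dstar
  simp only [zero_add] at this
  exact this.congr fun t => by rw [he t]; ring
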